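/- Let Δ ⊂ ℝⁿ be an n-dimensional simple polytope with facets F_1,…,F_N and suppose the facets F_{i_1},…,F_{i_k} have empty intersection. Then the k-th mixed partial derivative ∂_{i_1}⋯∂_{i_k} of the volume V(κ) of Δ(κ) with respect to the support numbers κ_{i_1},…,κ_{i_k} vanishes identically on the chamber C_Δ. -/

import Mathlib

open MeasureTheory Function Set

noncomputable section

namespace MassLinearPaper

def dotp {n : ℕ} (v x : Fin n → ℝ) : ℝ := ∑ j, v j * x j

def polytope {n N : ℕ} (η : Fin N → Fin n → ℝ) (κ : Fin N → ℝ) : Set (Fin n → ℝ) :=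
  {x | ∀ i, dotp (η i) x ≤ κ i}

def facet {n N : ℕ} (η : Fin N → Fin n → ℝ) (κ : Fin N → ℝ) (i : Fin N) : Set (Fin n → ℝ) :=
  {x ∈ polytope η κ | dotp (η i) x = κ i}

/-- A polytope is simple if at each point the active conormals are linearly independent. -/
def IsSimplePoly {n N : ℕ} (η : Fin N → Fin n → ℝ) (κ : Fin N → ℝ) : Prop :=
  ∀ x ∈ polytope η κ,
    LinearIndependent ℝ (fun i : {i : Fin N // dotp (η i) x = κ i} => η i.1)

/-- Two support vectors give analogous polytopes: the same collections of facets intersect. -/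
def Analogous {n N : ℕ} (η : Fin N → Fin n → ℝ) (κ κ' : Fin N → ℝ) : Prop :=
  ∀ I : Finset (Fin N),
    (⋂ i ∈ I, facet η κ' i).Nonempty ↔ (⋂ i ∈ I, facet η κ i).Nonempty

/-- The chamber of Δ(κ). -/
def chamber {n N : ℕ} (η : Fin N → Fin n → ℝ) (κ : Fin N → ℝ) : Set (Fin N → ℝ) :=
  connectedComponentIn {κ' | IsSimplePoly η κ' ∧ Analogous η κ κ'} κ

/-- Standing hypotheses: simple, bounded, nonempty interior, all facets nonempty. -/
def GoodPolytope {n N : ℕ} (η : Fin N → Fin n → ℝ) (κ : Fin N → ℝ) : Prop :=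
  IsSimplePoly η κ ∧ Bornology.IsBounded (polytope η κ) ∧
    (interior (polytope η κ)).Nonempty ∧ ∀ i, (facet η κ i).Nonempty

/-- The center of mass of Δ(κ). -/
def centroid {n N : ℕ} (η : Fin N → Fin n → ℝ) (κ : Fin N → ℝ) : Fin n → ℝ :=
  ⨍ x in polytope η κ, x

/-- The volume of Δ(κ) as a function of κ. -/
def volFn {n N : ℕ} (η : Fin N → Fin n → ℝ) : (Fin N → ℝ) → ℝ :=
  fun κ => (volume (polytope η κ)).toReal

/-- Partial derivative with respect to the i-th support number. -/
def pd {N : ℕ} (i : Fin N) (f : (Fin N → ℝ) → ℝ) : (Fin N → ℝ) → ℝ :=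
  fun κ => fderiv ℝ f κ (Pi.single i 1)

def face {n N : ℕ} (η : Fin N → Fin n → ℝ) (κ : Fin N → ℝ) (S : Finset (Fin N)) :
    Set (Fin n → ℝ) :=
  ⋂ i ∈ S, facet η κ i

/-- Centroid of a face with respect to Hausdorff measure of the appropriate dimension. -/
def faceCentroid {n N : ℕ} (η : Fin N → Fin n → ℝ) (κ : Fin N → ℝ) (S : Finset (Fin N)) :
    Fin n → ℝ :=
  ⨍ x in face η κ S, x ∂(μH[(n : ℝ) - S.card])

/-- The facet `F i` is H-symmetric: `⟨H, c(κ)⟩` does not depend on `κ i` on the chamber. -/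
def SymmFacet {n N : ℕ} (η : Fin N → Fin n → ℝ) (κ : Fin N → ℝ) (H : Fin n → ℝ)
    (i : Fin N) : Prop :=
  ∀ κ₁ ∈ chamber η κ, ∀ κ₂ ∈ chamber η κ, (∀ j, j ≠ i → κ₁ j = κ₂ j) →
    dotp H (centroid η κ₁) = dotp H (centroid η κ₂)

/-- H is mass linear with coefficients γ and constant C. -/
def MassLinear {n N : ℕ} (η : Fin N → Fin n → ℝ) (κ : Fin N → ℝ) (H : Fin n → ℝ)
    (γ : Fin N → ℝ) (C : ℝ) : Prop :=
  ∀ κ' ∈ chamber η κ, dotp H (centroid η κ') = ∑ i, γ i * κ' i + C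

/-- A facet is pervasive if it meets every other facet. -/
def Pervasive {n N : ℕ} (η : Fin N → Fin n → ℝ) (κ : Fin N → ℝ) (i : Fin N) : Prop :=
  ∀ j, j ≠ i → (facet η κ i ∩ facet η κ j).Nonempty

/-- A facet is flat if the conormals of all other facets meeting it lie in a hyperplane. -/
def FlatFacet {n N : ℕ} (η : Fin N → Fin n → ℝ) (κ : Fin N → ℝ) (i : Fin N) : Prop :=
  ∃ ξ : Fin n → ℝ, ξ ≠ 0 ∧
    ∀ j, j ≠ i → (facet η κ i ∩ facet η κ j).Nonempty → dotp (η j) ξ = 0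

/-- Equivalence of facets, via the criterion of Lemma 4.4. -/
def FacetEquiv {n N : ℕ} (η : Fin N → Fin n → ℝ) (i j : Fin N) : Prop :=
  i = j ∨ ∃ ξ : Fin n → ℝ, dotp (η i) ξ = 1 ∧ dotp (η j) ξ = -1 ∧
    ∀ k, k ≠ i → k ≠ j → dotp (η k) ξ = 0

def IsEquivClass {n N : ℕ} (η : Fin N → Fin n → ℝ) (I : Finset (Fin N)) : Prop :=
  I.Nonempty ∧ (∀ i ∈ I, ∀ j ∈ I, FacetEquiv η i j) ∧
    ∀ i ∈ I, ∀ j, FacetEquiv η i j → j ∈ I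

/-- H is inessential. -/
def Inessential {n N : ℕ} (η : Fin N → Fin n → ℝ) (H : Fin n → ℝ) : Prop :=
  ∃ β : Fin N → ℝ, H = ∑ i, β i • η i ∧
    ∀ I : Finset (Fin N), IsEquivClass η I → ∑ i ∈ I, β i = 0

end MassLinearPaper

open MassLinearPaper

/-! Like those of `Δ(κ)`, the facets `F_i`, `i ∈ l`, of `Δ(κ')` have no common point, so by
compactness there is `δ > 0` such that no point of `Δ(κ' + δ)` lies within `δ` of all their
hyperplanes. The indicator of `Δ(κ)` at a point `x` is a product over `i` of step functions of
`κ_i`, so its mixed finite difference over a box in the coordinates of `l` is a product of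
one-variable differences; over a box of size `< δ` around `κ'` it vanishes, since a point
contributing to it would lie within `δ` of every hyperplane of `F_i`, `i ∈ l`. Integrating in `x`,
all mixed differences of `V` over such boxes vanish.

Differences are turned into derivatives one coordinate at a time. Since `pd` is built from
`fderiv`, it is `0` at non-differentiable points rather than a limit of difference quotients, so we
carry a set `D` off which the current function vanishes and on which its mixed differences vanish;
differentiating in `κ_j` replaces `D` by the differentiability points whose punctured `κ_j`-line
stays in `D`. -/

open Filter Topology

theorem HasDerivAt.eq_zero_of_frequently_eq_zero {𝕜 F : Type*} [NontriviallyNormedField 𝕜]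
    [NormedAddCommGroup F] [NormedSpace 𝕜 F] {φ : 𝕜 → F} {d : F} {x : 𝕜}
    (hφ : HasDerivAt φ d x) (hzero : ∃ᶠ s in 𝓝[≠] x, φ s = 0) : d = 0 := by
  have hx : φ x = 0 := tendsto_nhds_unique_of_frequently_eq
    (hφ.continuousAt.tendsto.mono_left nhdsWithin_le_nhds) tendsto_const_nhds hzero
  refine tendsto_nhds_unique_of_frequently_eq (hasDerivAt_iff_tendsto_slope.1 hφ)
    tendsto_const_nhds (hzero.mono fun s hs => ?_)
  simp [slope_def_module, hs, hx]

namespace MassLinearPaper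

open Finset Bornology

section BoxSum

variable {ι α : Type*} [DecidableEq ι]

/-- The corner `T.piecewise b a` takes its coordinates in `T` from `b` and all others from `a`, so
this is the mixed finite difference of `f` in the coordinates of `S` over the box spanned by `a`
and `b`. -/
def boxSum (S : Finset ι) (f : (ι → α) → ℝ) (a b : ι → α) : ℝ :=
  ∑ T ∈ S.powerset, (-1) ^ #(S \ T) * f (T.piecewise b a)

@[simp] lemma boxSum_empty (f : (ι → α) → ℝ) (a b : ι → α) : boxSum ∅ f a b = f a := by
  simp [boxSum]

lemma boxSum_insert {S : Finset ι} {j : ι} (hj : j ∉ S) (f : (ι → α) → ℝ) (a b : ι → α) :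
    boxSum (insert j S) f a b = boxSum S f (update a j (b j)) b - boxSum S f a b := by
  rw [boxSum, sum_powerset_insert hj, boxSum, boxSum, sub_eq_add_neg, ← sum_neg_distrib,
    add_comm]
  congr 1 <;> refine sum_congr rfl fun T hT => ?_
  · have hjT : j ∉ T := fun h => hj (mem_powerset.1 hT h)
    rw [Finset.insert_sdiff_insert, Finset.sdiff_insert_of_notMem hj, Finset.piecewise_insert,
      T.update_piecewise_of_notMem _ _ hjT]
  · rw [Finset.insert_sdiff_of_notMem _ fun h => hj (mem_powerset.1 hT h),
      card_insert_of_notMem fun h => hj (mem_sdiff.1 h).1, pow_succ]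
    ring

lemma boxSum_congr_right {S : Finset ι} {f : (ι → α) → ℝ} {a b b' : ι → α}
    (h : ∀ i ∈ S, b i = b' i) : boxSum S f a b = boxSum S f a b' :=
  sum_congr rfl fun T hT => by
    rw [T.piecewise_congr (fun i hi => h i (mem_powerset.1 hT hi)) fun _ _ => rfl]

lemma boxSum_comp_add [AddZeroClass α] {S : Finset ι} {v : ι → α} (hv : ∀ i ∈ S, v i = 0)
    (f : (ι → α) → ℝ) (a b : ι → α) :
    boxSum S (fun x => f (x + v)) a b = boxSum S f (a + v) b := by
  refine sum_congr rfl fun T hT => ?_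
  congr 1
  show f (T.piecewise b a + v) = f (T.piecewise b (a + v))
  congr 1
  ext i
  by_cases hi : i ∈ T
  · simp [hi, hv i (Finset.mem_powerset.1 hT hi)]
  · simp [hi]

lemma boxSum_prod [Fintype ι] (S : Finset ι) (g : ι → α → ℝ) (a b : ι → α) :
    boxSum S (fun x => ∏ i, g i (x i)) a b
      = (∏ i ∈ S, (g i (b i) - g i (a i))) * ∏ i ∈ Sᶜ, g i (a i) := by
  have corner : ∀ T ⊆ S, ∏ i, g i (T.piecewise b a i)
      = (∏ i ∈ T, g i (b i)) * (∏ i ∈ S \ T, g i (a i)) * ∏ i ∈ Sᶜ, g i (a i) := by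
    intro T hT
    rw [← prod_mul_prod_compl S, ← prod_sdiff hT, mul_comm (∏ i ∈ S \ T, _)]
    congr 1; congr 1
    all_goals refine prod_congr rfl fun i hi => ?_
    · rw [Finset.piecewise_eq_of_mem _ _ _ hi]
    · rw [Finset.piecewise_eq_of_notMem _ _ _ (mem_sdiff.1 hi).2]
    · rw [Finset.piecewise_eq_of_notMem _ _ _ fun h => mem_compl.1 hi (hT h)]
  simp_rw [sub_eq_add_neg, prod_add, sum_mul, boxSum]
  refine sum_congr rfl fun T hT => ?_
  rw [corner T (mem_powerset.1 hT), prod_neg]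
  ring

lemma hasDerivAt_boxSum {S : Finset ι} {F : ℝ → (ι → α) → ℝ} {F' : (ι → α) → ℝ}
    {a b : ι → α} {x : ℝ}
    (h : ∀ T ⊆ S, HasDerivAt (fun s => F s (T.piecewise b a)) (F' (T.piecewise b a)) x) :
    HasDerivAt (fun s => boxSum S (F s) a b) (boxSum S F' a b) x := by
  simp only [boxSum]
  exact HasDerivAt.fun_sum fun T hT => (h T (mem_powerset.1 hT)).const_mul _

def BoxSumsVanish (S : Finset ι) (f : (ι → α) → ℝ) (D : Set (ι → α)) : Prop :=
  ∀ a b, (∀ T ⊆ S, T.piecewise b a ∈ D) → boxSum S f a b = 0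

end BoxSum

section BoxShift

variable {ι : Type*} [DecidableEq ι]

lemma boxSum_sub_boxSum_eq_boxSum_insert {S : Finset ι} {j : ι} (hj : j ∉ S)
    (f : (ι → ℝ) → ℝ) (a b : ι → ℝ) (s s' : ℝ) :
    boxSum S f (a + s • Pi.single j 1) b - boxSum S f (a + s' • Pi.single j 1) b
      = boxSum (insert j S) f (a + s' • Pi.single j 1) (update b j (a j + s)) := by
  have hb : ∀ i ∈ S, update b j (a j + s) i = b i := fun i hi =>
    update_of_ne (ne_of_mem_of_not_mem hi hj) _ _
  rw [boxSum_insert hj, boxSum_congr_right hb, boxSum_congr_right hb]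
  congr 2
  ext i
  by_cases hi : i = j
  · subst hi; simp
  · simp [hi]

lemma piecewise_update_add_single {S T : Finset ι} {j : ι} (hj : j ∉ S) (hT : T ⊆ insert j S)
    (a b : ι → ℝ) (s s' : ℝ) :
    T.piecewise (update b j (a j + s)) (a + s' • Pi.single j 1)
      = (T.erase j).piecewise b a + (if j ∈ T then s else s') • Pi.single j 1 := by
  ext i
  by_cases hi : i = j
  · subst hi; by_cases hiT : i ∈ T <;> simp [hiT]
  · by_cases hiT : i ∈ T <;> by_cases hjT : j ∈ T <;> simp [hi, hiT, hjT]

end BoxShift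

section PartialDerivatives

variable {N : ℕ}

lemma hasDerivAt_pd {h : (Fin N → ℝ) → ℝ} {c : Fin N → ℝ} (hd : DifferentiableAt ℝ h c)
    (j : Fin N) : HasDerivAt (fun s : ℝ => h (c + s • Pi.single j 1)) (pd j h c) 0 := by
  have hline : HasDerivAt (fun s : ℝ => c + s • (Pi.single j 1 : Fin N → ℝ)) (Pi.single j 1) 0 :=
    by simpa using ((hasDerivAt_id (0 : ℝ)).smul_const (Pi.single j 1 : Fin N → ℝ)).const_add c
  exact hd.hasFDerivAt.comp_hasDerivAt_of_eq 0 hline (by simp)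

def lineSupport (j : Fin N) (h : (Fin N → ℝ) → ℝ) (D : Set (Fin N → ℝ)) : Set (Fin N → ℝ) :=
  {c | DifferentiableAt ℝ h c ∧ ∀ᶠ s in 𝓝[≠] (0 : ℝ), c + s • Pi.single j 1 ∈ D}

lemma eqOn_pd_zero {B D : Set (Fin N → ℝ)} (hB : IsOpen B) {h : (Fin N → ℝ) → ℝ}
    (hh : EqOn h 0 (B \ D)) (j : Fin N) : EqOn (pd j h) 0 (B \ lineSupport j h D) := by
  rintro c ⟨hcB, hc⟩
  by_cases hd : DifferentiableAt ℝ h c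
  · have hoff : ∃ᶠ s in 𝓝[≠] (0 : ℝ), c + s • Pi.single j 1 ∉ D :=
      not_eventually.1 fun hD => hc ⟨hd, hD⟩
    have hin : ∀ᶠ s in 𝓝[≠] (0 : ℝ), c + s • Pi.single j 1 ∈ B := by
      refine (Continuous.tendsto' ?_ 0 c (by simp)).mono_left nhdsWithin_le_nhds |>.eventually
        (hB.mem_nhds hcB)
      fun_prop
    exact (hasDerivAt_pd hd j).eq_zero_of_frequently_eq_zero
      ((hoff.and_eventually hin).mono fun s hs => hh ⟨hs.2, hs.1⟩)
  · simp [pd, fderiv_zero_of_not_differentiableAt hd]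

lemma boxSumsVanish_pd {S : Finset (Fin N)} {j : Fin N} (hj : j ∉ S) {h : (Fin N → ℝ) → ℝ}
    {D : Set (Fin N → ℝ)} (hbox : BoxSumsVanish (insert j S) h D) :
    BoxSumsVanish S (pd j h) (lineSupport j h D) := by
  intro a b hcorner
  have hline : ∀ᶠ s in 𝓝[≠] (0 : ℝ), ∀ T ⊆ S, T.piecewise b a + s • Pi.single j 1 ∈ D := by
    simpa using (eventually_all_finset S.powerset).2 fun T hT =>
      (hcorner T (mem_powerset.1 hT)).2
  set G : ℝ → ℝ := fun s => boxSum S h (a + s • Pi.single j 1) b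
  have hG : HasDerivAt G (boxSum S (pd j h) a b) 0 := by
    have hoff : ∀ s : ℝ, ∀ i ∈ S, (s • Pi.single j (1 : ℝ)) i = 0 := fun s i hi => by
      simp [ne_of_mem_of_not_mem hi hj]
    simpa only [G, ← boxSum_comp_add (hoff _)] using
      hasDerivAt_boxSum fun T hT => hasDerivAt_pd (hcorner T hT).1 j
  -- `G s - G s'` is a mixed difference of `h` over `insert j S` with all corners in `D`.
  have hconst : ∀ s s' : ℝ, (∀ T ⊆ S, T.piecewise b a + s • Pi.single j 1 ∈ D) →
      (∀ T ⊆ S, T.piecewise b a + s' • Pi.single j 1 ∈ D) → G s - G s' = 0 := by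
    intro s s' hs hs'
    rw [boxSum_sub_boxSum_eq_boxSum_insert hj]
    refine hbox _ _ fun T hT => ?_
    rw [piecewise_update_add_single hj hT]
    have hT' : T.erase j ⊆ S := subset_insert_iff.1 hT
    split_ifs
    exacts [hs _ hT', hs' _ hT']
  obtain ⟨s₀, hs₀⟩ := hline.exists
  exact (hG.sub_const (G s₀)).eq_zero_of_frequently_eq_zero
    (hline.mono fun s hs => hconst s s₀ hs hs₀).frequently

theorem eqOn_foldr_pd_zero {B : Set (Fin N → ℝ)} (hB : IsOpen B) {m : List (Fin N)}
    (hm : m.Nodup) {h : (Fin N → ℝ) → ℝ} {D : Set (Fin N → ℝ)} (hh : EqOn h 0 (B \ D))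
    (hbox : BoxSumsVanish m.toFinset h D) : EqOn (m.foldr pd h) 0 B := by
  induction m using List.reverseRecOn generalizing h D with
  | nil =>
    intro c hc
    by_cases hcD : c ∈ D
    · simpa using hbox c c (by simpa using hcD)
    · exact hh ⟨hc, hcD⟩
  | append_singleton ms j ih =>
    obtain ⟨hms, -, hdisj⟩ := List.nodup_append'.1 hm
    have hj : j ∉ ms.toFinset := fun h => hdisj (List.mem_toFinset.1 h) (List.mem_singleton_self j)
    have hins : (ms ++ [j]).toFinset = insert j ms.toFinset := by ext; simp
    rw [hins] at hbox
    simpa [List.foldr_append] using ih hms (eqOn_pd_zero hB hh j) (boxSumsVanish_pd hj hbox)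

end PartialDerivatives

section Geometry

variable {n N : ℕ}

lemma dotp_eq_dotProduct (v x : Fin n → ℝ) : dotp v x = v ⬝ᵥ x := rfl

lemma continuous_dotp (v : Fin n → ℝ) : Continuous (dotp v) :=
  continuous_const.dotProduct continuous_id

lemma isClosed_polytope (η : Fin N → Fin n → ℝ) (κ : Fin N → ℝ) : IsClosed (polytope η κ) := by
  simp only [polytope, ofPred_forall]
  exact isClosed_iInter fun i => isClosed_le (continuous_dotp _) continuous_const

lemma dotp_lt_of_mem_interior {η : Fin N → Fin n → ℝ} {κ : Fin N → ℝ} {x : Fin n → ℝ}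
    (hx : x ∈ interior (polytope η κ)) {i : Fin N} (hi : η i ≠ 0) : dotp (η i) x < κ i := by
  have hnear : ∀ᶠ t in 𝓝 (0 : ℝ), x + t • η i ∈ polytope η κ := by
    have hline : Tendsto (fun t : ℝ => x + t • η i) (𝓝 0) (𝓝 x) := by
      simpa using (show Continuous fun t : ℝ => x + t • η i by fun_prop).tendsto 0
    exact hline.eventually (mem_interior_iff_mem_nhds.1 hx)
  obtain ⟨t, ht, htpos⟩ :=
    ((hnear.filter_mono nhdsWithin_le_nhds).and (self_mem_nhdsWithin (s := Ioi 0))).exists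
  have hsq : 0 < η i ⬝ᵥ η i := lt_of_le_of_ne (sum_nonneg fun j _ => mul_self_nonneg _)
    (Ne.symm (dotProduct_self_eq_zero.not.2 hi))
  have := ht i
  simp only [dotp_eq_dotProduct, dotProduct_add, dotProduct_smul, smul_eq_mul] at this ⊢
  nlinarith

lemma isBounded_polytope {η : Fin N → Fin n → ℝ} {κ : Fin N → ℝ}
    (hbd : IsBounded (polytope η κ)) (hint : (interior (polytope η κ)).Nonempty)
    (κ' : Fin N → ℝ) : IsBounded (polytope η κ') := by
  obtain ⟨x₀, hx₀⟩ := hint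
  obtain ⟨M, hM⟩ := (Set.finite_range fun i =>
    (κ' i - dotp (η i) x₀) / (κ i - dotp (η i) x₀)).bddAbove
  obtain ⟨R, hR⟩ := (Metric.isBounded_iff_subset_closedBall x₀).1 hbd
  set t := max M 1
  have ht : 0 < t := lt_max_of_lt_right one_pos
  refine (Metric.isBounded_iff_subset_closedBall x₀).2 ⟨t * R, fun x hx => ?_⟩
  have hy : x₀ + t⁻¹ • (x - x₀) ∈ polytope η κ := by
    intro i
    have hxi := hx i
    simp only [dotp_eq_dotProduct, dotProduct_add, dotProduct_smul, dotProduct_sub,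
      smul_eq_mul] at hxi ⊢
    by_cases hi : η i = 0
    · simpa [hi, dotp_eq_dotProduct] using interior_subset hx₀ i
    · have hslack := dotp_lt_of_mem_interior hx₀ hi
      have hMi : κ' i - η i ⬝ᵥ x₀ ≤ t * (κ i - η i ⬝ᵥ x₀) :=
        (div_le_iff₀ (sub_pos.2 hslack)).1 ((hM ⟨i, rfl⟩).trans (le_max_left _ _))
      rw [← le_sub_iff_add_le', inv_mul_le_iff₀ ht]
      linarith
  have := hR hy
  rw [Metric.mem_closedBall, dist_eq_norm, add_sub_cancel_left, norm_smul, norm_inv,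
    Real.norm_of_nonneg ht.le, inv_mul_le_iff₀ ht] at this
  rwa [Metric.mem_closedBall, dist_eq_norm]

def nearFace (η : Fin N → Fin n → ℝ) (κ : Fin N → ℝ) (S : Finset (Fin N)) (δ : ℝ) :
    Set (Fin n → ℝ) :=
  {x | (∀ i, dotp (η i) x ≤ κ i + δ) ∧ ∀ j ∈ S, κ j - δ ≤ dotp (η j) x}

lemma isClosed_nearFace (η : Fin N → Fin n → ℝ) (κ : Fin N → ℝ) (S : Finset (Fin N)) (δ : ℝ) :
    IsClosed (nearFace η κ S δ) := by
  simp only [nearFace, ofPred_and, ofPred_forall]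
  exact (isClosed_iInter fun i => isClosed_le (continuous_dotp _) continuous_const).inter
    (isClosed_iInter fun j => isClosed_iInter fun _ => isClosed_le continuous_const
      (continuous_dotp _))

lemma nearFace_mono {η : Fin N → Fin n → ℝ} {κ : Fin N → ℝ} {S : Finset (Fin N)} {δ δ' : ℝ}
    (h : δ ≤ δ') : nearFace η κ S δ ⊆ nearFace η κ S δ' := fun _ hx =>
  ⟨fun i => (hx.1 i).trans (by linarith), fun j hj => le_trans (by linarith) (hx.2 j hj)⟩

lemma exists_nearFace_eq_empty {η : Fin N → Fin n → ℝ} {κ : Fin N → ℝ} {S : Finset (Fin N)}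
    (hbd : ∀ κ', IsBounded (polytope η κ')) (hface : face η κ S = ∅) :
    ∃ δ > 0, nearFace η κ S δ = ∅ := by
  by_contra! hne
  have hcompact : ∀ δ : Ioi (0 : ℝ), IsCompact (nearFace η κ S δ) := fun δ =>
    Metric.isCompact_of_isClosed_isBounded (isClosed_nearFace η κ S δ)
      ((hbd fun i => κ i + δ).subset fun x hx => hx.1)
  have hdir : Directed (· ⊇ ·) fun δ : Ioi (0 : ℝ) => nearFace η κ S δ :=
    fun δ δ' => ⟨⟨min δ δ', Set.mem_Ioi.2 (lt_min δ.2 δ'.2)⟩,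
      nearFace_mono (min_le_left _ _), nearFace_mono (min_le_right _ _)⟩
  obtain ⟨x, hx⟩ := IsCompact.nonempty_iInter_of_directed_nonempty_isCompact_isClosed _ hdir
    (fun δ => hne δ δ.2) hcompact fun δ => isClosed_nearFace η κ S δ
  simp only [mem_iInter] at hx
  have hle : ∀ i, dotp (η i) x ≤ κ i := fun i =>
    le_of_forall_pos_le_add fun δ hδ => (hx ⟨δ, hδ⟩).1 i
  have hge : ∀ j ∈ S, κ j ≤ dotp (η j) x := fun j hj =>
    le_of_forall_pos_le_add fun δ hδ => sub_le_iff_le_add.1 ((hx ⟨δ, hδ⟩).2 j hj)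
  have hmem : x ∈ face η κ S :=
    mem_iInter₂.2 fun j hj => ⟨hle, le_antisymm (hle j) (hge j hj)⟩
  simp [hface] at hmem

end Geometry

section Volume

variable {n N : ℕ}

lemma indicator_polytope_eq_prod (η : Fin N → Fin n → ℝ) (κ : Fin N → ℝ) (x : Fin n → ℝ) :
    (polytope η κ).indicator 1 x = ∏ i, if dotp (η i) x ≤ κ i then (1 : ℝ) else 0 := by
  rw [prod_boole]
  simp [indicator_apply, polytope]

lemma boxSum_indicator_polytope_eq_zero {η : Fin N → Fin n → ℝ} {κ : Fin N → ℝ}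
    {S : Finset (Fin N)} {δ : ℝ} (hK : nearFace η κ S δ = ∅) {a b : Fin N → ℝ}
    (hcorner : ∀ T ⊆ S, T.piecewise b a ∈ Metric.ball κ δ) (x : Fin n → ℝ) :
    boxSum S (fun κ' => (polytope η κ').indicator 1 x) a b = 0 := by
  have ha : ∀ i, |a i - κ i| < δ := fun i =>
    (dist_le_pi_dist a κ i).trans_lt (by simpa using hcorner ∅ (empty_subset S))
  have hb : ∀ i ∈ S, |b i - κ i| < δ := fun i hi => by
    simpa [Real.dist_eq] using
      (dist_le_pi_dist _ κ i).trans_lt (hcorner {i} (singleton_subset_iff.2 hi))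
  simp_rw [indicator_polytope_eq_prod]
  rw [boxSum_prod S fun i t => if dotp (η i) x ≤ t then (1 : ℝ) else 0]
  by_contra hne
  obtain ⟨hS, hSc⟩ := mul_ne_zero_iff.1 hne
  rw [prod_ne_zero_iff] at hS hSc
  have hup : ∀ i, dotp (η i) x ≤ κ i + δ := fun i => by
    have := abs_lt.1 (ha i)
    by_cases hi : i ∈ S
    · have := abs_lt.1 (hb i hi)
      have := hS i hi
      split_ifs at this <;> first | linarith | simp at this
    · have := hSc i (mem_compl.2 hi)
      split_ifs at this <;> first | linarith | simp at this
  have hlow : ∀ j ∈ S, κ j - δ ≤ dotp (η j) x := fun j hj => by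
    have := abs_lt.1 (ha j)
    have := abs_lt.1 (hb j hj)
    have := hS j hj
    split_ifs at this <;> first | linarith | simp at this
  exact (eq_empty_iff_forall_notMem.1 hK) x ⟨hup, hlow⟩

lemma boxSum_volFn_eq_integral {η : Fin N → Fin n → ℝ} (hbd : ∀ κ, IsBounded (polytope η κ))
    (S : Finset (Fin N)) (a b : Fin N → ℝ) :
    boxSum S (volFn η) a b = ∫ x, boxSum S (fun κ => (polytope η κ).indicator 1 x) a b := by
  have hmeas : ∀ κ, MeasurableSet (polytope η κ) := fun κ => (isClosed_polytope η κ).measurableSet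
  simp only [boxSum]
  rw [integral_finsetSum _ fun T _ => ((integrable_indicator_iff (hmeas _)).2
    (integrableOn_const (hbd _).measure_lt_top.ne)).const_mul _]
  refine sum_congr rfl fun T _ => ?_
  rw [integral_const_mul, integral_indicator_one (hmeas _), measureReal_def]
  rfl

lemma boxSumsVanish_volFn {η : Fin N → Fin n → ℝ} {κ : Fin N → ℝ} {S : Finset (Fin N)} {δ : ℝ}
    (hbd : ∀ κ, IsBounded (polytope η κ)) (hK : nearFace η κ S δ = ∅) :
    BoxSumsVanish S (volFn η) (Metric.ball κ δ) := fun a b hcorner => by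
  simp [boxSum_volFn_eq_integral hbd, boxSum_indicator_polytope_eq_zero hK hcorner]

end Volume

end MassLinearPaper

/-- If the facets `F_{i₁},…,F_{i_k}` have empty intersection, the corresponding mixed
partial derivative of the volume vanishes on the chamber. -/
theorem stmt3 {n N : ℕ} (η : Fin N → Fin n → ℝ) (κ : Fin N → ℝ)
    (hΔ : GoodPolytope η κ) (l : List (Fin N)) (hnd : l.Nodup)
    (hempty : (⋂ i ∈ l, facet η κ i) = ∅) :
    ∀ κ' ∈ chamber η κ, (l.foldr pd (volFn η)) κ' = 0 := by
  obtain ⟨-, hbd, hint, -⟩ := hΔ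
  have hbounded := isBounded_polytope hbd hint
  intro κ' hκ'
  have hface : face η κ' l.toFinset = ∅ := by
    have hana := (connectedComponentIn_subset _ _ hκ').2 l.toFinset
    simp only [face, List.mem_toFinset, ← not_nonempty_iff_eq_empty] at hana hempty ⊢
    exact hana.not.2 hempty
  obtain ⟨δ, hδ, hK⟩ := exists_nearFace_eq_empty hbounded hface
  exact eqOn_foldr_pd_zero Metric.isOpen_ball hnd (by simp) (boxSumsVanish_volFn hbounded hK)
    (Metric.mem_ball_self hδ)
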